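/- arXiv:1511.05783 — 5 statements merged into one kernel-verified Lean document; each statement's English description precedes it below -/
import Mathlib

section
/- Let G and G' be subsets of [7], not necessarily distinct, such that neither is strictly less than the other under the order ≤, and max(|G|, |G'|) = 4. Assume it is not the case that G = G' = {1,2,3,4}, and assume that [7]∖G' ≤ G ∪ {8} does not hold. Then [5] ≤ G + G' holds, but [6] ≤ G + G' does not hold. -/
/-- `[k] = {1,…,k}` as a finset of positive integers. -/
def bra (k : ℕ) : Finset ℕ+ := (Finset.range k).image (fun i => ⟨i + 1, i.succ_pos⟩)

/-- The domination order on finite multisets of positive integers: `MLE S T` holds iff there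
is a submultiset `T'` of `T` that can be matched up with `S` so that each element of `S` is
at most its partner in `T'`. -/
def MLE (S T : Multiset ℕ+) : Prop := ∃ T' ≤ T, Multiset.Rel (· ≤ ·) S T'

private lemma mle_zero (T : Multiset ℕ+) : MLE 0 T :=
  ⟨0, Multiset.zero_le T, Multiset.rel_zero_left.mpr rfl⟩

private lemma mle_cons_iff (a : ℕ+) (S T : Multiset ℕ+) :
    MLE (a ::ₘ S) T ↔ ∃ b ∈ T, a ≤ b ∧ MLE S (T.erase b) := by
  constructor
  · rintro ⟨T', hle, hrel⟩
    rw [Multiset.rel_cons_left] at hrel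
    obtain ⟨b, T'', hab, hrel, rfl⟩ := hrel
    have hb : b ∈ T := Multiset.mem_of_le hle (Multiset.mem_cons_self b T'')
    refine ⟨b, hb, hab, T'', ?_, hrel⟩
    have := Multiset.erase_le_erase b hle
    rwa [Multiset.erase_cons_head] at this
  · rintro ⟨b, hb, hab, T', hle, hrel⟩
    refine ⟨b ::ₘ T', ?_, Multiset.rel_cons_left.mpr ⟨b, T', hab, hrel, rfl⟩⟩
    calc b ::ₘ T' ≤ b ::ₘ T.erase b := Multiset.cons_le_cons b hle
    _ = T := Multiset.cons_erase hb

private def mleDecList : (l : List ℕ+) → (T : Multiset ℕ+) → Decidable (MLE (↑l) T)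
  | [], T => isTrue (mle_zero T)
  | a :: l, T =>
      haveI : ∀ b, Decidable (MLE (↑l) (T.erase b)) := fun b => mleDecList l (T.erase b)
      @decidable_of_decidable_of_iff _ _
        (Multiset.decidableExistsMultiset)
        ((mle_cons_iff a (↑l) T).symm)

instance MLE.dec (S T : Multiset ℕ+) : Decidable (MLE S T) :=
  Quotient.recOnSubsingleton S (fun l => mleDecList l T)

set_option maxHeartbeats 8000000 in
set_option maxRecDepth 100000 in
private lemma key : ∀ G ∈ (bra 7).powerset, ∀ G' ∈ (bra 7).powerset,
    max G.card G'.card = 4 →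
    ¬(G = bra 4 ∧ G' = bra 4) →
    ¬(MLE G.val G'.val ∧ G ≠ G') → ¬(MLE G'.val G.val ∧ G' ≠ G) →
    ¬ MLE ((bra 7 \ G').val) ((insert (8 : ℕ+) G).val) →
    MLE (↑([5,4,3,2,1] : List ℕ+) : Multiset ℕ+) (G.val + G'.val) ∧
      ¬ MLE (↑([6,5,4,3,2,1] : List ℕ+) : Multiset ℕ+) (G.val + G'.val) := by decide

/-- Proposition on subsets of `[7]`: if `G, G' ⊆ [7]` are incomparable (neither strictly less
than the other), `max(|G|,|G'|) = 4`, not both equal to `{1,2,3,4}`, and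
`[7] ∖ G' ≤ G ∪ {8}` fails, then `[5] ≤ G + G'` but `[6] ≰ G + G'`. -/
theorem stmt_1 (G G' : Finset ℕ+) (hG : G ⊆ bra 7) (hG' : G' ⊆ bra 7)
    (h1 : ¬(MLE G.val G'.val ∧ G ≠ G')) (h2 : ¬(MLE G'.val G.val ∧ G' ≠ G))
    (hmax : max G.card G'.card = 4)
    (hne : ¬(G = bra 4 ∧ G' = bra 4))
    (hnl : ¬ MLE ((bra 7 \ G').val) ((insert (8 : ℕ+) G).val)) :
    MLE (bra 5).val (G.val + G'.val) ∧ ¬ MLE (bra 6).val (G.val + G'.val) := by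
  have h5 : (bra 5).val = (↑([5,4,3,2,1] : List ℕ+) : Multiset ℕ+) := by decide
  have h6 : (bra 6).val = (↑([6,5,4,3,2,1] : List ℕ+) : Multiset ℕ+) := by decide
  rw [h5, h6]
  exact key G (Finset.mem_powerset.mpr hG) G' (Finset.mem_powerset.mpr hG') hmax hne h1 h2 hnl
end

section
/- For all finite multisets A, B, C of positive integers, A + C ≤ B + C holds if and only if A ≤ B holds. In particular, the order ≤ is cancellative with respect to multiset union. -/
namespace Multiset

variable {α : Type*} [Preorder α]

theorem rel_le_refl (s : Multiset α) : Rel (· ≤ ·) s s :=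
  rel_refl_of_refl_on fun _ _ => le_rfl

theorem exists_rel_le_of_rel_le_cons_of_le_cons [DecidableEq α] {c : α} {A B T : Multiset α}
    (hrel : Rel (· ≤ ·) (c ::ₘ A) T) (hT : T ≤ c ::ₘ B) : ∃ T' ≤ B, Rel (· ≤ ·) A T' := by
  obtain ⟨b, T, hcb, hA, rfl⟩ := rel_cons_left.mp hrel
  have hB : (b ::ₘ T).erase c ≤ B := by simpa using erase_le_erase c hT
  by_cases hcT : c ∈ T
  · obtain ⟨U, rfl⟩ : ∃ U, T = c ::ₘ U := ⟨T.erase c, (cons_erase hcT).symm⟩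
    obtain ⟨a, A', hac, hA', rfl⟩ := rel_cons_right.mp hA
    refine ⟨b ::ₘ U, ?_, hA'.cons (hac.trans hcb)⟩
    rwa [cons_swap, erase_cons_head] at hB
  · refine ⟨T, le_trans ?_ hB, hA⟩
    simpa [erase_of_notMem hcT] using erase_le_erase c (le_cons_self T b)

end Multiset

theorem MLE.add_right {A B : Multiset ℕ+} (h : MLE A B) (C : Multiset ℕ+) :
    MLE (A + C) (B + C) := by
  obtain ⟨T, hTB, hAT⟩ := h
  exact ⟨T + C, add_le_add_left hTB C, hAT.add (Multiset.rel_le_refl C)⟩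

theorem MLE.of_cons_cons {c : ℕ+} {A B : Multiset ℕ+} (h : MLE (c ::ₘ A) (c ::ₘ B)) :
    MLE A B := by
  obtain ⟨T, hTB, hAT⟩ := h
  exact Multiset.exists_rel_le_of_rel_le_cons_of_le_cons hAT hTB

theorem MLE.of_add_right {A B C : Multiset ℕ+} (h : MLE (A + C) (B + C)) : MLE A B := by
  induction C using Multiset.induction_on with
  | empty => simpa using h
  | cons c C ih =>
    rw [Multiset.add_cons, Multiset.add_cons] at h
    exact ih h.of_cons_cons

/-- The order `≤` on finite multisets of positive integers is cancellative with respect to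
multiset union: `A + C ≤ B + C` iff `A ≤ B`. -/
theorem stmt_2 (A B C : Multiset ℕ+) : MLE (A + C) (B + C) ↔ MLE A B :=
  ⟨MLE.of_add_right, fun h => h.add_right C⟩
end

section
/- Let G and G' be finite multisets of positive integers and let k ≥ 0 satisfy [k] ≤ G + G'. Then there is a partition [k] = S ⊔ T into two disjoint subsets with S ≤ G and T ≤ G'. -/
theorem Multiset.exists_le_le_eq_add_of_le_add {α : Type*} [DecidableEq α]
    {T G G' : Multiset α} (h : T ≤ G + G') : ∃ A ≤ G, ∃ B ≤ G', T = A + B :=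
  ⟨T ∩ G, inter_le_right, T - G, tsub_le_iff_left.mpr h, by rw [add_comm, sub_add_inter]⟩

theorem MLE.exists_eq_add_of_add {S G G' : Multiset ℕ+} (h : MLE S (G + G')) :
    ∃ S₁ S₂, S = S₁ + S₂ ∧ MLE S₁ G ∧ MLE S₂ G' := by
  obtain ⟨T, hT, hST⟩ := h
  obtain ⟨A, hA, B, hB, rfl⟩ := Multiset.exists_le_le_eq_add_of_le_add hT
  obtain ⟨S₁, S₂, h₁, h₂, hS⟩ := Multiset.rel_add_right.mp hST
  exact ⟨S₁, S₂, hS, ⟨A, hA, h₁⟩, ⟨B, hB, h₂⟩⟩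

theorem Finset.exists_disjoint_union_eq_of_val_eq_add {α : Type*} [DecidableEq α]
    {s : Finset α} {S₁ S₂ : Multiset α} (h : s.val = S₁ + S₂) :
    ∃ t u : Finset α, Disjoint t u ∧ t ∪ u = s ∧ t.val = S₁ ∧ u.val = S₂ := by
  obtain ⟨hS₁, hS₂, hdisj⟩ := Multiset.nodup_add.mp (h ▸ s.nodup)
  have hdisj' : Disjoint (⟨S₁, hS₁⟩ : Finset α) ⟨S₂, hS₂⟩ := disjoint_val.mp hdisj
  refine ⟨⟨S₁, hS₁⟩, ⟨S₂, hS₂⟩, hdisj', ?_, rfl, rfl⟩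
  rw [← disjUnion_eq_union _ _ hdisj', ← val_inj, disjUnion_val, h]

/-- If `[k] ≤ G + G'` then `[k]` can be partitioned as `S ⊔ T` with `S ≤ G` and `T ≤ G'`. -/
theorem stmt_3 (G G' : Multiset ℕ+) (k : ℕ) (h : MLE (bra k).val (G + G')) :
    ∃ S T : Finset ℕ+, Disjoint S T ∧ S ∪ T = bra k ∧ MLE S.val G ∧ MLE T.val G' := by
  obtain ⟨S₁, S₂, hsplit, h₁, h₂⟩ := h.exists_eq_add_of_add
  obtain ⟨S, T, hST, hunion, rfl, rfl⟩ := Finset.exists_disjoint_union_eq_of_val_eq_add hsplit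
  exact ⟨S, T, hST, hunion, h₁, h₂⟩
end

section
/- Let R be an algebra of type (𝒢, m, n), let i ∈ [n−1], and let S be a subgee. (1) If i ∈ S, then Vᵢ W_S − (−1)^{ρᵢ(S∖{i})} W_{S∖{i}} lies in the ℚ-span of {V_U : U a subgee}, where ρᵢ(T) = #{t ∈ T : t > i}. (2) If i ∉ S, then Vᵢ W_S lies in the ℚ-span of {V_U : U a subgee}. Moreover, if m − |S| ≥ s, then these memberships are exact equalities: in case (1), Vᵢ W_S = (−1)^{ρᵢ(S∖{i})} W_{S∖{i}}, and in case (2), Vᵢ W_S = 0. -/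
open scoped TensorProduct

/-- `S` is a subgee of the collection `𝒢` of gees. -/
def Subgee (𝒢 : Finset (Finset ℕ+)) (S : Finset ℕ+) : Prop := ∃ G ∈ 𝒢, MLE S.val G.val

/-- `rho i T` is the number of elements of `T` greater than `i`. -/
def rho (i : ℕ+) (T : Finset ℕ+) : ℕ := (T.filter (fun t => i < t)).card

/-- The ordered monomial `V_S = V_{s₁} ⋯ V_{s_k}` for `S = {s₁ < ⋯ < s_k}`. -/
def VSmon {R : Type} [Ring R] (V : ℕ+ → R) (S : Finset ℕ+) : R :=
  ((S.sort (· ≤ ·)).map V).prod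

/-- An algebra of type `(𝒢, m, n)`. -/
structure IsPolygonAlgebra (n m : ℕ) (𝒢 : Finset (Finset ℕ+))
    (R : Type) [Ring R] [Algebra ℚ R] [FiniteDimensional ℚ R]
    (𝒜 : ℕ → Submodule ℚ R) [GradedAlgebra 𝒜]
    (V : ℕ+ → R) (W : Finset ℕ+ → R) : Prop where
  hn : 4 ≤ n
  hm : 1 ≤ m
  gee_nonempty : 𝒢.Nonempty
  gee_sub : ∀ G ∈ 𝒢, G ⊆ bra (n - 1)
  gee_incomp : ∀ G ∈ 𝒢, ∀ G' ∈ 𝒢, MLE G.val G'.val → G = G'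
  gee_card : ∀ G ∈ 𝒢, G.card ≤ m - 1
  gcomm : ∀ (i j : ℕ) (x y : R), x ∈ 𝒜 i → y ∈ 𝒜 j →
    x * y = ((-1 : ℚ)) ^ (i * j) • (y * x)
  V_mem : ∀ i : ℕ+, (i : ℕ) ≤ n - 1 → V i ∈ 𝒜 1
  W_mem : ∀ S : Finset ℕ+, Subgee 𝒢 S → W S ∈ 𝒜 (m - S.card)
  VS_ne : ∀ S : Finset ℕ+, S ⊆ bra (n - 1) → (VSmon V S ≠ 0 ↔ Subgee 𝒢 S)
  basis_indep : LinearIndependent ℚ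
    (Sum.elim (fun S : {S : Finset ℕ+ // Subgee 𝒢 S} => VSmon V S.1)
      (fun S : {S : Finset ℕ+ // Subgee 𝒢 S} => W S.1))
  basis_span : Submodule.span ℚ (Set.range
    (Sum.elim (fun S : {S : Finset ℕ+ // Subgee 𝒢 S} => VSmon V S.1)
      (fun S : {S : Finset ℕ+ // Subgee 𝒢 S} => W S.1))) = ⊤
  VW : ∀ S S' : Finset ℕ+, Subgee 𝒢 S → Subgee 𝒢 S' → S.card = S'.card →
    VSmon V S * W S' = if S = S' then W ∅ else 0
  WW : ∀ S S' : Finset ℕ+, Subgee 𝒢 S → Subgee 𝒢 S' → S.card + S'.card = m →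
    W S * W S' = 0

/-- `R` has no exotic products. -/
def NoExoticProducts (n : ℕ) (𝒢 : Finset (Finset ℕ+))
    {R : Type} [Ring R] [Algebra ℚ R] (V : ℕ+ → R) (W : Finset ℕ+ → R) : Prop :=
  (∀ S S' : Finset ℕ+, Subgee 𝒢 S → Subgee 𝒢 S' → W S * W S' = 0) ∧
  (∀ i : ℕ+, (i : ℕ) ≤ n - 1 → ∀ S : Finset ℕ+, Subgee 𝒢 S →
    (i ∈ S → V i * W S = ((-1 : ℚ)) ^ (rho i (S.erase i)) • W (S.erase i)) ∧
    (i ∉ S → V i * W S = 0))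

section Tensor

variable {R : Type} [Ring R] [Algebra ℚ R] (𝒜 : ℕ → Submodule ℚ R) [GradedAlgebra 𝒜]

/-- The multiplication map `μ : R ⊗̂ R → R`. -/
noncomputable def muMap : (𝒜 ᵍ⊗[ℚ] 𝒜) →ₗ[ℚ] R :=
  (LinearMap.mul' ℚ R).comp (GradedTensorProduct.of ℚ 𝒜 𝒜).symm.toLinearMap

/-- `x ⊗ y` as an element of the graded tensor product `R ⊗̂ R`. -/
noncomputable def tm (x y : R) : 𝒜 ᵍ⊗[ℚ] 𝒜 := GradedTensorProduct.of ℚ 𝒜 𝒜 (x ⊗ₜ y)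

/-- `ū = u ⊗ 1 - 1 ⊗ u`. -/
noncomputable def ubar (u : R) : 𝒜 ᵍ⊗[ℚ] 𝒜 := tm 𝒜 u 1 - tm 𝒜 1 u

/-- `V̄_D = ∏_{i ∈ D} V̄ᵢ` with factors in increasing order of `i`. -/
noncomputable def Vbar (V : ℕ+ → R) (D : Finset ℕ+) : 𝒜 ᵍ⊗[ℚ] 𝒜 :=
  ((D.sort (· ≤ ·)).map (fun i => ubar 𝒜 (V i))).prod

/-- The set of `k` such that some product of `k` zero divisors in `R ⊗̂ R` is nonzero;
`zcl R` is the greatest element of this set. -/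
def zclSet : Set ℕ :=
  {k : ℕ | ∃ L : List (𝒜 ᵍ⊗[ℚ] 𝒜), L.length = k ∧
    (∀ x ∈ L, muMap 𝒜 x = 0) ∧ L.prod ≠ 0}

end Tensor

/-!
Expand `Vᵢ W_S` in the basis `{V_U} ∪ {W_T}`. The coefficient of `W_T` is read off by
multiplying with `V_T` and taking the coefficient of `W_∅`: the duality `V_T W_{T'} = δ W_∅`
kills all other `W`'s, and the monomials `V_U` span a subspace closed under multiplication by
the `V`'s which contains no multiple of `W_∅`. Graded commutativity gives
`V_T Vᵢ = (−1)^{ρᵢ(T)} V_{T ∪ {i}}` (and `0` if `i ∈ T`), so that coefficient is the claimed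
sign exactly when `T ∪ {i} = S`. For the exact equalities, the remainder lies in the span of
the `V_U`, all of degree `|U| ≤ s`, but is homogeneous of degree `1 + m − |S| > s`.
-/

theorem Module.Basis.repr_eq_zero_of_mem_of_deg_ne {ι σ K M : Type*} [DecidableEq σ]
    [Semiring K] [AddCommMonoid M] [Module K M] (ℳ : σ → Submodule K M)
    [DirectSum.Decomposition ℳ] (b : Module.Basis ι K M) (deg : ι → σ)
    (hb : ∀ j, b j ∈ ℳ (deg j)) {x : M} {d : σ} (hx : x ∈ ℳ d) {j : ι} (hj : deg j ≠ d) :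
    b.repr x j = 0 := by
  let proj : M →ₗ[K] M := (ℳ (deg j)).subtype ∘ₗ DirectSum.component K σ (fun i => ℳ i) (deg j) ∘ₗ
    (DirectSum.decomposeLinearEquiv ℳ).toLinearMap
  have proj_apply (y : M) : proj y = DirectSum.decompose ℳ y (deg j) := rfl
  have coord_comp_proj : b.coord j ∘ₗ proj = b.coord j := by
    refine b.ext fun k => ?_
    by_cases hk : deg k = deg j
    · simp [proj_apply, DirectSum.decompose_of_mem_same ℳ (hk ▸ hb k)]
    · have hkj : k ≠ j := fun h => hk (h ▸ rfl)
      simp [proj_apply, DirectSum.decompose_of_mem_ne ℳ (hb k) hk, Finsupp.single_eq_of_ne' hkj]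
  rw [← b.coord_apply, ← coord_comp_proj, LinearMap.comp_apply, proj_apply,
    DirectSum.decompose_of_mem_ne ℳ hx (Ne.symm hj), map_zero]

theorem Finset.sort_union_of_forall_lt {α : Type*} [LinearOrder α] {A B : Finset α}
    (h : ∀ a ∈ A, ∀ b ∈ B, a < b) :
    (A ∪ B).sort (· ≤ ·) = A.sort (· ≤ ·) ++ B.sort (· ≤ ·) := by
  classical
  have hlt : (A.sort (· ≤ ·) ++ B.sort (· ≤ ·)).Pairwise (· < ·) :=
    List.pairwise_append.mpr ⟨A.sortedLT_sort.pairwise, B.sortedLT_sort.pairwise,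
      fun a ha b hb => h a (by simpa using ha) b (by simpa using hb)⟩
  have hset : (A.sort (· ≤ ·) ++ B.sort (· ≤ ·)).toFinset = A ∪ B := by
    simp [List.toFinset_append]
  rw [← hset, List.toFinset_sort _ hlt.nodup]
  exact hlt.imp le_of_lt

theorem mem_bra {k : ℕ} {j : ℕ+} : j ∈ bra k ↔ (j : ℕ) ≤ k := by
  refine Finset.mem_image.trans ?_
  constructor
  · rintro ⟨i, hi, rfl⟩
    simpa using hi
  · intro hj
    have hpos := j.pos
    refine ⟨j - 1, Finset.mem_range.mpr (by omega), PNat.coe_injective ?_⟩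
    simp only [PNat.mk_coe]
    omega

abbrev Subgees (𝒢 : Finset (Finset ℕ+)) : Type := {S : Finset ℕ+ // Subgee 𝒢 S}

namespace Subgee

variable {𝒢 : Finset (Finset ℕ+)} {S S' : Finset ℕ+}

theorem empty (h𝒢 : 𝒢.Nonempty) : Subgee 𝒢 ∅ := by
  obtain ⟨G, hG⟩ := h𝒢
  exact ⟨G, hG, 0, Multiset.zero_le _, by simp⟩

theorem mono (hS : Subgee 𝒢 S) (hsub : S' ⊆ S) : Subgee 𝒢 S' := by
  obtain ⟨G, hG, T, hTG, hrel⟩ := hS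
  rw [← add_tsub_cancel_of_le (Finset.val_le_iff.mpr hsub), Multiset.rel_add_left] at hrel
  obtain ⟨T₀, T₁, hrel₀, -, rfl⟩ := hrel
  exact ⟨G, hG, T₀, le_trans (Multiset.le_add_right _ _) hTG, hrel₀⟩

theorem card_le_sup (hS : Subgee 𝒢 S) : S.card ≤ 𝒢.sup Finset.card := by
  obtain ⟨G, hG, T, hTG, hrel⟩ := hS
  calc S.card = Multiset.card T := Multiset.card_eq_card_of_rel hrel
    _ ≤ G.card := Multiset.card_le_card hTG
    _ ≤ 𝒢.sup Finset.card := Finset.le_sup hG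

theorem subset_bra {n : ℕ} (h𝒢 : ∀ G ∈ 𝒢, G ⊆ bra (n - 1)) (hS : Subgee 𝒢 S) :
    S ⊆ bra (n - 1) := by
  intro j hj
  obtain ⟨G, hG, T, hTG, hrel⟩ := hS.mono (Finset.singleton_subset_iff.mpr hj)
  obtain ⟨b, T', hjb, -, rfl⟩ :=
    Multiset.rel_cons_left.mp (show Multiset.Rel _ (j ::ₘ 0) T from hrel)
  have hb : (b : ℕ) ≤ n - 1 :=
    mem_bra.mp (h𝒢 G hG (Multiset.mem_of_le hTG (Multiset.mem_cons_self b T')))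
  exact mem_bra.mpr (le_trans (PNat.coe_le_coe j b |>.mpr hjb) hb)

end Subgee

def IsGradedCommutative {R : Type*} [Ring R] [Algebra ℚ R] (𝒜 : ℕ → Submodule ℚ R) : Prop :=
  ∀ (i j : ℕ) (x y : R), x ∈ 𝒜 i → y ∈ 𝒜 j → x * y = (-1 : ℚ) ^ (i * j) • (y * x)

section Monomials

variable {R : Type} [Ring R] {V : ℕ+ → R}

theorem VSmon_union {A B : Finset ℕ+} (h : ∀ a ∈ A, ∀ b ∈ B, a < b) :
    VSmon V (A ∪ B) = VSmon V A * VSmon V B := by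
  simp only [VSmon, Finset.sort_union_of_forall_lt h, List.map_append, List.prod_append]

theorem VSmon_insert (i : ℕ+) (T : Finset ℕ+) :
    VSmon V (insert i T) =
      VSmon V (T.filter (· < i)) * (V i * VSmon V (T.filter (i < ·))) := by
  have hsplit : insert i T = T.filter (· < i) ∪ ({i} ∪ T.filter (i < ·)) := by
    ext j
    simp only [Finset.mem_insert, Finset.mem_union, Finset.mem_filter, Finset.mem_singleton]
    grind
  rw [hsplit, VSmon_union, VSmon_union]
  · simp [VSmon]
  · simp
  · simp only [Finset.mem_filter, Finset.mem_union, Finset.mem_singleton]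
    grind

variable [Algebra ℚ R] {𝒜 : ℕ → Submodule ℚ R}

theorem IsGradedCommutative.mul_self_eq_zero (hcomm : IsGradedCommutative 𝒜) {x : R}
    (hx : x ∈ 𝒜 1) : x * x = 0 := by
  have hneg : x * x = -(x * x) := by simpa using hcomm 1 1 x x hx hx
  have htwo : (2 : ℚ) • (x * x) = 0 := by
    rw [two_smul]
    nth_rewrite 1 [hneg]
    exact neg_add_cancel _
  exact (smul_eq_zero.mp htwo).resolve_left two_ne_zero

theorem VSmon_mem [SetLike.GradedMonoid 𝒜] {T : Finset ℕ+} (hV : ∀ j ∈ T, V j ∈ 𝒜 1) :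
    VSmon V T ∈ 𝒜 T.card := by
  have := SetLike.list_prod_map_mem_graded (T.sort (· ≤ ·)) (fun _ => 1) V
    (fun j hj => hV j ((Finset.mem_sort _).mp hj))
  simpa [VSmon] using this

theorem VSmon_mul_comm_V [SetLike.GradedMonoid 𝒜] (hcomm : IsGradedCommutative 𝒜)
    {T : Finset ℕ+} (hV : ∀ j ∈ T, V j ∈ 𝒜 1) {i : ℕ+} (hi : V i ∈ 𝒜 1) :
    VSmon V T * V i = (-1 : ℚ) ^ T.card • (V i * VSmon V T) := by
  simpa using hcomm T.card 1 _ _ (VSmon_mem hV) hi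

theorem VSmon_mul_V_of_notMem [SetLike.GradedMonoid 𝒜] (hcomm : IsGradedCommutative 𝒜)
    {T : Finset ℕ+} (hV : ∀ j ∈ T, V j ∈ 𝒜 1) {i : ℕ+} (hi : V i ∈ 𝒜 1) (hiT : i ∉ T) :
    VSmon V T * V i = (-1 : ℚ) ^ rho i T • VSmon V (insert i T) := by
  have hsplit : T = T.filter (· < i) ∪ T.filter (i < ·) := by
    ext j
    simp only [Finset.mem_union, Finset.mem_filter]
    grind
  have hupper : ∀ j ∈ T.filter (i < ·), V j ∈ 𝒜 1 := fun j hj => hV j (Finset.mem_filter.mp hj).1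
  conv_lhs => rw [hsplit]
  rw [VSmon_union (fun a ha b hb => by simp only [Finset.mem_filter] at ha hb; grind),
    mul_assoc, VSmon_mul_comm_V hcomm hupper hi, mul_smul_comm, VSmon_insert, rho]

theorem VSmon_mul_V_of_mem [SetLike.GradedMonoid 𝒜] (hcomm : IsGradedCommutative 𝒜)
    {T : Finset ℕ+} (hV : ∀ j ∈ T, V j ∈ 𝒜 1) {i : ℕ+} (hiT : i ∈ T) :
    VSmon V T * V i = 0 := by
  have hupper : ∀ j ∈ T.filter (i < ·), V j ∈ 𝒜 1 := fun j hj => hV j (Finset.mem_filter.mp hj).1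
  rw [← Finset.insert_eq_of_mem hiT, VSmon_insert, mul_assoc, mul_assoc,
    VSmon_mul_comm_V hcomm hupper (hV i hiT), mul_smul_comm, ← mul_assoc,
    hcomm.mul_self_eq_zero (hV i hiT)]
  simp

end Monomials

def monomialSpan (𝒢 : Finset (Finset ℕ+)) {R : Type} [Ring R] [Algebra ℚ R] (V : ℕ+ → R) :
    Submodule ℚ R :=
  Submodule.span ℚ {x : R | ∃ U : Finset ℕ+, Subgee 𝒢 U ∧ x = VSmon V U}

namespace IsPolygonAlgebra

variable {n m : ℕ} {𝒢 : Finset (Finset ℕ+)} {R : Type} [Ring R] [Algebra ℚ R]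
  [FiniteDimensional ℚ R] {𝒜 : ℕ → Submodule ℚ R} [GradedAlgebra 𝒜]
  {V : ℕ+ → R} {W : Finset ℕ+ → R}

theorem V_mem_of_subset (h : IsPolygonAlgebra n m 𝒢 R 𝒜 V W) {T : Finset ℕ+}
    (hT : T ⊆ bra (n - 1)) : ∀ j ∈ T, V j ∈ 𝒜 1 :=
  fun j hj => h.V_mem j (mem_bra.mp (hT hj))

theorem subset_bra (h : IsPolygonAlgebra n m 𝒢 R 𝒜 V W) {T : Finset ℕ+} (hT : Subgee 𝒢 T) :
    T ⊆ bra (n - 1) :=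
  hT.subset_bra h.gee_sub

theorem card_le (h : IsPolygonAlgebra n m 𝒢 R 𝒜 V W) {T : Finset ℕ+} (hT : Subgee 𝒢 T) :
    T.card ≤ m - 1 :=
  le_trans hT.card_le_sup (Finset.sup_le h.gee_card)

theorem VSmon_mem_monomialSpan (h : IsPolygonAlgebra n m 𝒢 R 𝒜 V W) {T : Finset ℕ+}
    (hT : T ⊆ bra (n - 1)) : VSmon V T ∈ monomialSpan 𝒢 V := by
  by_cases hsub : Subgee 𝒢 T
  · exact Submodule.subset_span ⟨T, hsub, rfl⟩
  · rw [not_ne_iff.mp (mt (h.VS_ne T hT).mp hsub)]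
    exact Submodule.zero_mem _

theorem mul_V_mem_monomialSpan (h : IsPolygonAlgebra n m 𝒢 R 𝒜 V W) {y : R}
    (hy : y ∈ monomialSpan 𝒢 V) {i : ℕ+} (hi : i ∈ bra (n - 1)) :
    y * V i ∈ monomialSpan 𝒢 V := by
  induction hy using Submodule.span_induction with
  | mem x hx =>
    obtain ⟨U, hU, rfl⟩ := hx
    have hV := h.V_mem_of_subset (h.subset_bra hU)
    by_cases hiU : i ∈ U
    · rw [VSmon_mul_V_of_mem h.gcomm hV hiU]
      exact Submodule.zero_mem _
    · rw [VSmon_mul_V_of_notMem h.gcomm hV (h.V_mem i (mem_bra.mp hi)) hiU]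
      exact Submodule.smul_mem _ _
        (h.VSmon_mem_monomialSpan (Finset.insert_subset hi (h.subset_bra hU)))
  | zero => simp
  | add a b _ _ ha hb => simpa [add_mul] using Submodule.add_mem _ ha hb
  | smul a x _ hx => simpa [smul_mul_assoc] using Submodule.smul_mem _ a hx

theorem mul_VSmon_mem_monomialSpan (h : IsPolygonAlgebra n m 𝒢 R 𝒜 V W) {y : R}
    (hy : y ∈ monomialSpan 𝒢 V) {U : Finset ℕ+} (hU : U ⊆ bra (n - 1)) :
    y * VSmon V U ∈ monomialSpan 𝒢 V := by
  have hlist : ∀ l : List ℕ+, (∀ j ∈ l, j ∈ bra (n - 1)) →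
      ∀ y ∈ monomialSpan 𝒢 V, y * (l.map V).prod ∈ monomialSpan 𝒢 V := by
    intro l hl
    induction l with
    | nil => simp
    | cons a l ih =>
      intro y hy
      rw [List.map_cons, List.prod_cons, ← mul_assoc]
      exact ih (fun j hj => hl j (List.mem_cons_of_mem a hj)) _
        (h.mul_V_mem_monomialSpan hy (hl a List.mem_cons_self))
  exact hlist _ (fun j hj => hU ((Finset.mem_sort _).mp hj)) y hy

noncomputable def basis (h : IsPolygonAlgebra n m 𝒢 R 𝒜 V W) :
    Module.Basis (Subgees 𝒢 ⊕ Subgees 𝒢) ℚ R :=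
  Module.Basis.mk h.basis_indep h.basis_span.ge

@[simp]
theorem basis_inl (h : IsPolygonAlgebra n m 𝒢 R 𝒜 V W) (U : Subgees 𝒢) :
    h.basis (Sum.inl U) = VSmon V U.1 := by
  simp [basis]

@[simp]
theorem basis_inr (h : IsPolygonAlgebra n m 𝒢 R 𝒜 V W) (T : Subgees 𝒢) :
    h.basis (Sum.inr T) = W T.1 := by
  simp [basis]

theorem repr_W (h : IsPolygonAlgebra n m 𝒢 R 𝒜 V W) (T : Subgees 𝒢) :
    h.basis.repr (W T.1) = Finsupp.single (Sum.inr T) 1 := by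
  rw [← basis_inr h T, Module.Basis.repr_self]

def basisDeg (m : ℕ) (𝒢 : Finset (Finset ℕ+)) : Subgees 𝒢 ⊕ Subgees 𝒢 → ℕ :=
  Sum.elim (fun U => U.1.card) (fun T => m - T.1.card)

theorem basis_mem_basisDeg (h : IsPolygonAlgebra n m 𝒢 R 𝒜 V W) (j : Subgees 𝒢 ⊕ Subgees 𝒢) :
    h.basis j ∈ 𝒜 (basisDeg m 𝒢 j) := by
  rcases j with U | T
  · simpa [basisDeg] using VSmon_mem (h.V_mem_of_subset (h.subset_bra U.2))
  · simpa [basisDeg] using h.W_mem T.1 T.2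

theorem repr_eq_zero_of_mem (h : IsPolygonAlgebra n m 𝒢 R 𝒜 V W) {x : R} {d : ℕ}
    (hx : x ∈ 𝒜 d) {j : Subgees 𝒢 ⊕ Subgees 𝒢} (hj : basisDeg m 𝒢 j ≠ d) :
    h.basis.repr x j = 0 :=
  h.basis.repr_eq_zero_of_mem_of_deg_ne 𝒜 _ h.basis_mem_basisDeg hx hj

theorem mem_monomialSpan_iff (h : IsPolygonAlgebra n m 𝒢 R 𝒜 V W) {z : R} :
    z ∈ monomialSpan 𝒢 V ↔ ∀ T : Subgees 𝒢, h.basis.repr z (Sum.inr T) = 0 := by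
  constructor
  · intro hz T
    induction hz using Submodule.span_induction with
    | mem x hx =>
      obtain ⟨U, hU, rfl⟩ := hx
      rw [← basis_inl h ⟨U, hU⟩, Module.Basis.repr_self, Finsupp.single_eq_of_ne (by simp)]
    | zero => simp
    | add a b _ _ ha hb => simp [ha, hb]
    | smul a x _ hx => simp [hx]
  · intro hz
    rw [← h.basis.linearCombination_repr z, Finsupp.linearCombination_apply]
    refine Submodule.sum_mem _ fun j hj => ?_
    rcases j with U | T
    · exact Submodule.smul_mem _ _ (Submodule.subset_span ⟨U.1, U.2, by simp⟩)
    · exact absurd (hz T) (Finsupp.mem_support_iff.mp hj)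

theorem eq_zero_of_mem_monomialSpan (h : IsPolygonAlgebra n m 𝒢 R 𝒜 V W) {z : R}
    (hz : z ∈ monomialSpan 𝒢 V) {d : ℕ} (hzd : z ∈ 𝒜 d) (hd : 𝒢.sup Finset.card < d) :
    z = 0 := by
  refine h.basis.ext_elem fun j => ?_
  rcases j with U | T
  · have hU := U.2.card_le_sup
    rw [h.repr_eq_zero_of_mem hzd (by simp only [basisDeg, Sum.elim_inl]; omega), map_zero,
      Finsupp.zero_apply]
  · rw [(h.mem_monomialSpan_iff.mp hz) T, map_zero, Finsupp.zero_apply]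

theorem repr_VSmon_mul_W (h : IsPolygonAlgebra n m 𝒢 R 𝒜 V W) {U S : Finset ℕ+}
    (hU : U ⊆ bra (n - 1)) (hS : Subgee 𝒢 S) (hcard : U.card = S.card) :
    h.basis.repr (VSmon V U * W S) (Sum.inr ⟨∅, Subgee.empty h.gee_nonempty⟩) =
      if U = S then 1 else 0 := by
  by_cases hUsub : Subgee 𝒢 U
  · rw [h.VW U S hUsub hS hcard]
    split_ifs
    · simp [h.repr_W ⟨∅, Subgee.empty h.gee_nonempty⟩]
    · simp
  · have hUS : U ≠ S := fun hUS => hUsub (hUS ▸ hS)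
    rw [not_ne_iff.mp (mt (h.VS_ne U hU).mp hUsub), zero_mul, if_neg hUS, map_zero,
      Finsupp.zero_apply]

theorem repr_VSmon_mul (h : IsPolygonAlgebra n m 𝒢 R 𝒜 V W) (T : Subgees 𝒢) {y : R}
    (hy : y ∈ 𝒜 (m - T.1.card)) :
    h.basis.repr (VSmon V T.1 * y) (Sum.inr ⟨∅, Subgee.empty h.gee_nonempty⟩) =
      h.basis.repr y (Sum.inr T) := by
  have hext : h.basis.coord (Sum.inr ⟨∅, Subgee.empty h.gee_nonempty⟩) ∘ₗ
      LinearMap.mulLeft ℚ (VSmon V T.1) ∘ₗ GradedAlgebra.proj 𝒜 (m - T.1.card) =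
        h.basis.coord (Sum.inr T) := by
    refine h.basis.ext fun j => ?_
    simp only [LinearMap.comp_apply, LinearMap.mulLeft_apply, GradedAlgebra.proj_apply,
      Module.Basis.coord_apply, Module.Basis.repr_self]
    by_cases hj : basisDeg m 𝒢 j = m - T.1.card
    · rw [DirectSum.decompose_of_mem_same 𝒜 (hj ▸ h.basis_mem_basisDeg j)]
      rcases j with U | T'
      · have hmon := h.mul_VSmon_mem_monomialSpan
          (h.VSmon_mem_monomialSpan (h.subset_bra T.2)) (h.subset_bra U.2)
        rw [basis_inl, h.mem_monomialSpan_iff.mp hmon, Finsupp.single_eq_of_ne (by simp)]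
      · have hcard : T.1.card = T'.1.card := by
          have := h.card_le T.2
          have := h.card_le T'.2
          simp only [basisDeg, Sum.elim_inr] at hj
          omega
        rw [basis_inr, h.repr_VSmon_mul_W (h.subset_bra T.2) T'.2 hcard, Finsupp.single_apply]
        simp only [Sum.inr.injEq, Subtype.ext_iff, eq_comm]
    · have hjT : j ≠ Sum.inr T := by rintro rfl; exact hj rfl
      rw [DirectSum.decompose_of_mem_ne 𝒜 (h.basis_mem_basisDeg j) hj, mul_zero, map_zero,
        Finsupp.zero_apply, Finsupp.single_eq_of_ne' hjT]
  simpa [GradedAlgebra.proj_apply, DirectSum.decompose_of_mem_same 𝒜 hy] using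
    LinearMap.congr_fun hext y

theorem repr_V_mul_W (h : IsPolygonAlgebra n m 𝒢 R 𝒜 V W) {i : ℕ+} (hi : (i : ℕ) ≤ n - 1)
    {S : Finset ℕ+} (hS : Subgee 𝒢 S) (T : Subgees 𝒢) :
    h.basis.repr (V i * W S) (Sum.inr T) =
      if i ∈ S ∧ T.1 = S.erase i then (-1 : ℚ) ^ rho i (S.erase i) else 0 := by
  have hx : V i * W S ∈ 𝒜 (1 + (m - S.card)) :=
    SetLike.mul_mem_graded (h.V_mem i hi) (h.W_mem S hS)
  have hTm := h.card_le T.2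
  have hSm := h.card_le hS
  by_cases hdeg : m - T.1.card = 1 + (m - S.card)
  · rw [← h.repr_VSmon_mul T (hdeg ▸ hx), ← mul_assoc]
    have hVT := h.V_mem_of_subset (h.subset_bra T.2)
    by_cases hiT : i ∈ T.1
    · rw [VSmon_mul_V_of_mem h.gcomm hVT hiT, zero_mul, map_zero, Finsupp.zero_apply, if_neg]
      rintro ⟨-, hTe⟩
      exact Finset.notMem_erase i S (hTe ▸ hiT)
    · have hcard : (insert i T.1).card = S.card := by
        rw [Finset.card_insert_of_notMem hiT]
        omega
      rw [VSmon_mul_V_of_notMem h.gcomm hVT (h.V_mem i hi) hiT, smul_mul_assoc, map_smul,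
        Finsupp.smul_apply, h.repr_VSmon_mul_W
          (Finset.insert_subset (mem_bra.mpr hi) (h.subset_bra T.2)) hS hcard]
      have hiff : insert i T.1 = S ↔ i ∈ S ∧ T.1 = S.erase i :=
        ⟨fun hTS => ⟨hTS ▸ Finset.mem_insert_self i T.1, hTS ▸ (Finset.erase_insert hiT).symm⟩,
          fun ⟨hiS, hTe⟩ => hTe ▸ Finset.insert_erase hiS⟩
      by_cases hc : i ∈ S ∧ T.1 = S.erase i
      · rw [if_pos (hiff.mpr hc), if_pos hc, hc.2, smul_eq_mul, mul_one]
      · rw [if_neg (mt hiff.mp hc), if_neg hc, smul_zero]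
  · rw [h.repr_eq_zero_of_mem hx (by simpa [basisDeg] using hdeg), if_neg]
    rintro ⟨hiS, hTe⟩
    have := Finset.card_pos.mpr ⟨i, hiS⟩
    rw [hTe, Finset.card_erase_of_mem hiS] at hdeg
    omega

theorem V_mul_W_sub_mem_monomialSpan (h : IsPolygonAlgebra n m 𝒢 R 𝒜 V W) {i : ℕ+}
    (hi : (i : ℕ) ≤ n - 1) {S : Finset ℕ+} (hS : Subgee 𝒢 S) :
    V i * W S - (if i ∈ S then (-1 : ℚ) ^ rho i (S.erase i) • W (S.erase i) else 0) ∈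
      monomialSpan 𝒢 V := by
  refine h.mem_monomialSpan_iff.mpr fun T => ?_
  rw [map_sub, Finsupp.sub_apply, h.repr_V_mul_W hi hS, sub_eq_zero]
  by_cases hiS : i ∈ S
  · rw [if_pos hiS, map_smul, h.repr_W ⟨S.erase i, hS.mono (Finset.erase_subset i S)⟩]
    simp [Finsupp.single_apply, Subtype.ext_iff, hiS, eq_comm]
  · simp [hiS]

theorem V_mul_W_sub_mem_graded (h : IsPolygonAlgebra n m 𝒢 R 𝒜 V W) {i : ℕ+}
    (hi : (i : ℕ) ≤ n - 1) {S : Finset ℕ+} (hS : Subgee 𝒢 S) :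
    V i * W S - (if i ∈ S then (-1 : ℚ) ^ rho i (S.erase i) • W (S.erase i) else 0) ∈
      𝒜 (1 + (m - S.card)) := by
  refine Submodule.sub_mem _ (SetLike.mul_mem_graded (h.V_mem i hi) (h.W_mem S hS)) ?_
  split_ifs with hiS
  · have hSm := h.card_le hS
    have hpos := Finset.card_pos.mpr ⟨i, hiS⟩
    have hW := h.W_mem _ (hS.mono (Finset.erase_subset i S))
    rw [Finset.card_erase_of_mem hiS] at hW
    exact Submodule.smul_mem _ _ (by convert hW using 2; omega)
  · exact Submodule.zero_mem _

end IsPolygonAlgebra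

/-- Products `Vᵢ · W_S` in an algebra of type `(𝒢, m, n)`: modulo the span of the monomials
`V_U` (`U` a subgee), `Vᵢ W_S` is `(−1)^{ρᵢ(S∖{i})} W_{S∖{i}}` if `i ∈ S` and `0` if `i ∉ S`;
and these are exact equalities when `m − |S| ≥ s`, where `s` is the maximal gee size. -/
theorem stmt_6 (n m : ℕ) (𝒢 : Finset (Finset ℕ+))
    (R : Type) [Ring R] [Algebra ℚ R] [FiniteDimensional ℚ R]
    (𝒜 : ℕ → Submodule ℚ R) [GradedAlgebra 𝒜] (V : ℕ+ → R) (W : Finset ℕ+ → R)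
    (h : IsPolygonAlgebra n m 𝒢 R 𝒜 V W)
    (i : ℕ+) (hi : (i : ℕ) ≤ n - 1) (S : Finset ℕ+) (hS : Subgee 𝒢 S) :
    (i ∈ S → V i * W S - ((-1 : ℚ)) ^ (rho i (S.erase i)) • W (S.erase i) ∈
      Submodule.span ℚ {x : R | ∃ U : Finset ℕ+, Subgee 𝒢 U ∧ x = VSmon V U}) ∧
    (i ∉ S → V i * W S ∈
      Submodule.span ℚ {x : R | ∃ U : Finset ℕ+, Subgee 𝒢 U ∧ x = VSmon V U}) ∧
    (𝒢.sup Finset.card ≤ m - S.card →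
      (i ∈ S → V i * W S = ((-1 : ℚ)) ^ (rho i (S.erase i)) • W (S.erase i)) ∧
      (i ∉ S → V i * W S = 0)) := by
  have hspan := h.V_mul_W_sub_mem_monomialSpan hi hS
  refine ⟨fun hiS => by simpa [hiS, monomialSpan] using hspan,
    fun hiS => by simpa [hiS, monomialSpan] using hspan,
    fun hsup => ?_⟩
  have hzero := h.eq_zero_of_mem_monomialSpan hspan (h.V_mul_W_sub_mem_graded hi hS)
    (by omega)
  exact ⟨fun hiS => by simpa [hiS, sub_eq_zero] using hzero,
    fun hiS => by simpa [hiS] using hzero⟩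
end

section
/- Let R be an algebra of type (𝒢, m, n) with no exotic products. Then every zero divisor in R ⊗̂ R lies in the two-sided ideal of R ⊗̂ R generated by the elements V̄ᵢ = Vᵢ⊗1 − 1⊗Vᵢ (1 ≤ i ≤ n−1) and W̄_S = W_S⊗1 − 1⊗W_S (S a subgee). -/
open scoped TensorProduct

/-!
`u ↦ ū = u ⊗ 1 - 1 ⊗ u` satisfies the Leibniz-type rule
`(ab)‾ = ā (b ⊗ 1) + (1 ⊗ a) b̄`, so any two-sided ideal containing `ū` for the algebra generators
`Vᵢ`, `W_S` of `R` contains `ū` for every `u ∈ R`. Then `a ⊗ b - 1 ⊗ ab = ā (1 ⊗ b)`, so every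
`x` is congruent to `1 ⊗ μ(x)` modulo that ideal, which settles the case `μ(x) = 0`.
-/

section GradedTensor

variable {R : Type} [Ring R] [Algebra ℚ R] {𝒜 : ℕ → Submodule ℚ R} [GradedAlgebra 𝒜]

lemma tm_mul_tm_one_left (a b : R) : tm 𝒜 1 a * tm 𝒜 1 b = tm 𝒜 1 (a * b) :=
  (map_mul (GradedTensorProduct.includeRight 𝒜 𝒜) a b).symm

lemma tm_mul_tm_one_right (a b : R) : tm 𝒜 a 1 * tm 𝒜 b 1 = tm 𝒜 (a * b) 1 :=
  (map_mul (GradedTensorProduct.includeLeft 𝒜 𝒜) a b).symm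

lemma muMap_tm (a b : R) : muMap 𝒜 (tm 𝒜 a b) = a * b := by
  simp [muMap, tm, LinearMap.mul'_apply]

lemma ubar_algebraMap (q : ℚ) : ubar 𝒜 (algebraMap ℚ R q) = 0 := by
  rw [ubar, tm, tm, Algebra.algebraMap_eq_smul_one, TensorProduct.smul_tmul, sub_self]

lemma ubar_add (a b : R) : ubar 𝒜 (a + b) = ubar 𝒜 a + ubar 𝒜 b := by
  simp only [ubar, tm, TensorProduct.add_tmul, TensorProduct.tmul_add, map_add]
  abel

lemma ubar_mul (a b : R) :
    ubar 𝒜 (a * b) = ubar 𝒜 a * tm 𝒜 b 1 + tm 𝒜 1 a * ubar 𝒜 b := by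
  rw [ubar, ubar, ubar, sub_mul, mul_sub, tm_mul_tm_one_right, tm_mul_tm_one_left]
  abel

lemma tm_sub_tm_one_mul (a b : R) : tm 𝒜 a b - tm 𝒜 1 (a * b) = ubar 𝒜 a * tm 𝒜 1 b := by
  rw [ubar, sub_mul, tm_mul_tm_one_left]
  congr 1
  exact (GradedTensorProduct.tmul_one_mul_one_tmul 𝒜 𝒜 a b).symm

variable {I : TwoSidedIdeal (𝒜 ᵍ⊗[ℚ] 𝒜)}

lemma ubar_mem_of_mem_adjoin {s : Set R} (hs : ∀ r ∈ s, ubar 𝒜 r ∈ I) {r : R}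
    (hr : r ∈ Algebra.adjoin ℚ s) : ubar 𝒜 r ∈ I := by
  induction hr using Algebra.adjoin_induction with
  | mem r hr => exact hs r hr
  | algebraMap q => rw [ubar_algebraMap]; exact I.zero_mem
  | add a b _ _ ha hb => rw [ubar_add]; exact I.add_mem ha hb
  | mul a b _ _ ha hb =>
    rw [ubar_mul]
    exact I.add_mem (I.mul_mem_right _ _ ha) (I.mul_mem_left _ _ hb)

lemma sub_tm_one_muMap_mem (hI : ∀ r, ubar 𝒜 r ∈ I) (x : 𝒜 ᵍ⊗[ℚ] 𝒜) :
    x - tm 𝒜 1 (muMap 𝒜 x) ∈ I := by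
  obtain ⟨y, rfl⟩ := (GradedTensorProduct.of ℚ 𝒜 𝒜).surjective x
  induction y using TensorProduct.induction_on with
  | zero => simp [tm]
  | tmul a b =>
    rw [← tm, muMap_tm, tm_sub_tm_one_mul]
    exact I.mul_mem_right _ _ (hI a)
  | add u v hu hv =>
    convert I.add_mem hu hv using 1
    simp only [map_add, tm, TensorProduct.tmul_add]
    abel

lemma mem_of_muMap_eq_zero {s : Set R} (hs : Algebra.adjoin ℚ s = ⊤)
    (hsI : ∀ r ∈ s, ubar 𝒜 r ∈ I) {x : 𝒜 ᵍ⊗[ℚ] 𝒜} (hx : muMap 𝒜 x = 0) : x ∈ I := by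
  have hI r : ubar 𝒜 r ∈ I := ubar_mem_of_mem_adjoin hsI (hs ▸ Algebra.mem_top)
  simpa [hx, tm] using sub_tm_one_muMap_mem hI x

end GradedTensor

lemma MLE.exists_ge_of_mem {S T : Multiset ℕ+} (h : MLE S T) {i : ℕ+} (hi : i ∈ S) :
    ∃ t ∈ T, i ≤ t := by
  obtain ⟨T', hT', hrel⟩ := h
  obtain ⟨t, ht, hit⟩ := Multiset.exists_mem_of_rel_of_mem hrel hi
  exact ⟨t, Multiset.mem_of_le hT' ht, hit⟩

lemma le_of_mem_bra {k : ℕ} {g : ℕ+} (h : g ∈ bra k) : (g : ℕ) ≤ k := by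
  obtain ⟨i, hi, rfl⟩ := Finset.mem_image.1 h
  simpa using hi

namespace IsPolygonAlgebra

variable {n m : ℕ} {𝒢 : Finset (Finset ℕ+)} {R : Type} [Ring R] [Algebra ℚ R]
  [FiniteDimensional ℚ R] {𝒜 : ℕ → Submodule ℚ R} [GradedAlgebra 𝒜] {V : ℕ+ → R}
  {W : Finset ℕ+ → R}

lemma le_of_mem_subgee (h : IsPolygonAlgebra n m 𝒢 R 𝒜 V W) {S : Finset ℕ+}
    (hS : Subgee 𝒢 S) {i : ℕ+} (hi : i ∈ S) : (i : ℕ) ≤ n - 1 := by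
  obtain ⟨G, hG, hSG⟩ := hS
  obtain ⟨g, hg, hig⟩ := hSG.exists_ge_of_mem hi
  exact (PNat.coe_le_coe i g).2 hig |>.trans (le_of_mem_bra (h.gee_sub G hG hg))

lemma adjoin_eq_top (h : IsPolygonAlgebra n m 𝒢 R 𝒜 V W) :
    Algebra.adjoin ℚ ({r | ∃ i : ℕ+, (i : ℕ) ≤ n - 1 ∧ r = V i} ∪
      {r | ∃ S : Finset ℕ+, Subgee 𝒢 S ∧ r = W S}) = ⊤ := by
  rw [← Algebra.toSubmodule_eq_top, eq_top_iff, ← h.basis_span, Submodule.span_le]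
  rintro _ ⟨⟨S, hS⟩ | ⟨S, hS⟩, rfl⟩
  · refine Subalgebra.list_prod_mem _ fun a ha => Algebra.subset_adjoin (Or.inl ?_)
    obtain ⟨i, hi, rfl⟩ := List.mem_map.1 ha
    exact ⟨i, h.le_of_mem_subgee hS (Finset.mem_sort _ |>.1 hi), rfl⟩
  · exact Algebra.subset_adjoin (Or.inr ⟨S, hS, rfl⟩)

end IsPolygonAlgebra

theorem stmt_13_general (n m : ℕ) (𝒢 : Finset (Finset ℕ+))
    (R : Type) [Ring R] [Algebra ℚ R] [FiniteDimensional ℚ R]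
    (𝒜 : ℕ → Submodule ℚ R) [GradedAlgebra 𝒜] (V : ℕ+ → R) (W : Finset ℕ+ → R)
    (h : IsPolygonAlgebra n m 𝒢 R 𝒜 V W) :
    ∀ x : 𝒜 ᵍ⊗[ℚ] 𝒜, muMap 𝒜 x = 0 →
      x ∈ TwoSidedIdeal.span
        ({y | ∃ i : ℕ+, (i : ℕ) ≤ n - 1 ∧ y = ubar 𝒜 (V i)} ∪
         {y | ∃ S : Finset ℕ+, Subgee 𝒢 S ∧ y = ubar 𝒜 (W S)}) := by
  intro x hx
  refine mem_of_muMap_eq_zero h.adjoin_eq_top ?_ hx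
  rintro _ (⟨i, hi, rfl⟩ | ⟨S, hS, rfl⟩)
  · exact TwoSidedIdeal.subset_span (Or.inl ⟨i, hi, rfl⟩)
  · exact TwoSidedIdeal.subset_span (Or.inr ⟨S, hS, rfl⟩)

/-- If `R` has no exotic products, every zero divisor of `R ⊗̂ R` lies in the two-sided ideal
generated by the elements `V̄ᵢ = Vᵢ⊗1 − 1⊗Vᵢ` (`1 ≤ i ≤ n−1`) and `W̄_S = W_S⊗1 − 1⊗W_S`
(`S` a subgee). -/
theorem stmt_13 (n m : ℕ) (𝒢 : Finset (Finset ℕ+))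
    (R : Type) [Ring R] [Algebra ℚ R] [FiniteDimensional ℚ R]
    (𝒜 : ℕ → Submodule ℚ R) [GradedAlgebra 𝒜] (V : ℕ+ → R) (W : Finset ℕ+ → R)
    (h : IsPolygonAlgebra n m 𝒢 R 𝒜 V W)
    (hne : NoExoticProducts n 𝒢 V W) :
    ∀ x : 𝒜 ᵍ⊗[ℚ] 𝒜, muMap 𝒜 x = 0 →
      x ∈ TwoSidedIdeal.span
        ({y | ∃ i : ℕ+, (i : ℕ) ≤ n - 1 ∧ y = ubar 𝒜 (V i)} ∪
         {y | ∃ S : Finset ℕ+, Subgee 𝒢 S ∧ y = ubar 𝒜 (W S)}) :=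
  stmt_13_general n m 𝒢 R 𝒜 V W h
end
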